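/- arXiv:2605.28040 — 2 statements merged into one kernel-verified Lean document; each statement's English description precedes it below -/
import Mathlib

section
/- Let p : Fin N → ℝ be a sorted probability vector and define the Gini coefficient G = 1 − 2·∑_{I=1}^{N} p_I·(N − I + 1/2)/N (with 1-based indexing, p sorted non-decreasing, ∑ p_I = 1). Then G ≤ 1 − 1/N, with equality if and only if p is concentrated on a single index (p_N = 1 and p_I = 0 for I < N). -/
/-- Gini coefficient bound: `G ≤ 1 − 1/N`, with equality iff the probability
vector is concentrated on the last (largest) index. Here `p` is 0-indexed and
`I`-th (1-based) entry is `p ⟨i, _⟩` with `i = I − 1`. -/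
theorem gini_le_max (N : ℕ) (hN : 1 ≤ N) (p : Fin N → ℝ)
    (hpos : ∀ I, 0 ≤ p I) (hmono : Monotone p)
    (hsum : ∑ I, p I = 1)
    (G : ℝ)
    (hG : G = 1 - 2 * ∑ I : Fin N, p I * (((N : ℝ) - ((I : ℕ) + 1) + 1/2) / N)) :
    G ≤ 1 - 1 / N ∧
      (G = 1 - 1 / N ↔
        (p ⟨N - 1, by omega⟩ = 1 ∧ ∀ I : Fin N, (I : ℕ) < N - 1 → p I = 0)) := by
  have hN0 : (N : ℝ) ≠ 0 := Nat.cast_ne_zero.mpr (by omega)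
  have hNpos : (0 : ℝ) < N := by positivity
  set T := ∑ i : Fin N, p i * ((N : ℝ) - 1 - (i : ℕ)) with hT
  have hterm : ∀ i : Fin N, 0 ≤ p i * ((N : ℝ) - 1 - (i : ℕ)) := by
    intro i
    have h1 : ((i : ℕ) : ℝ) + 1 ≤ (N : ℝ) := by exact_mod_cast i.isLt
    exact mul_nonneg (hpos i) (by linarith)
  have hTnn : 0 ≤ T := Finset.sum_nonneg fun i _ => hterm i
  have hGeq : G = 1 - 1 / N - 2 * T / N := by
    rw [hG]
    have hkey : ∑ I : Fin N, p I * (((N : ℝ) - ((I : ℕ) + 1) + 1/2) / N)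
        = T / N + 1 / (2 * N) := by
      have hstep : ∀ i : Fin N, p i * (((N : ℝ) - ((i : ℕ) + 1) + 1/2) / N)
          = p i * ((N : ℝ) - 1 - (i : ℕ)) / N + p i * (1 / (2 * N)) := by
        intro i; field_simp; ring
      rw [Finset.sum_congr rfl fun i _ => hstep i, Finset.sum_add_distrib,
        ← Finset.sum_div, ← Finset.sum_mul, hsum]
      ring
    rw [hkey]; field_simp; ring
  have hle : G ≤ 1 - 1 / N := by
    rw [hGeq]
    have : 0 ≤ 2 * T / N := by positivity
    linarith
  refine ⟨hle, ?_⟩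
  have hiffT : G = 1 - 1 / N ↔ T = 0 := by
    rw [hGeq]
    constructor
    · intro h
      have h2 : 2 * T / N = 0 := by linarith
      field_simp at h2
      linarith
    · intro h; rw [h]; ring
  rw [hiffT, Finset.sum_eq_zero_iff_of_nonneg fun i _ => hterm i]
  constructor
  · intro hz
    have hz' : ∀ I : Fin N, (I : ℕ) < N - 1 → p I = 0 := by
      intro i hi
      have h0 := hz i (Finset.mem_univ _)
      have h1 : ((i : ℕ) : ℝ) + 1 < (N : ℝ) := by exact_mod_cast (by omega : (i : ℕ) + 1 < N)
      have h2 : (N : ℝ) - 1 - (i : ℕ) ≠ 0 := by linarith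
      rcases mul_eq_zero.mp h0 with h | h
      · exact h
      · exact absurd h h2
    refine ⟨?_, hz'⟩
    have := Finset.sum_eq_single_of_mem (⟨N - 1, by omega⟩ : Fin N)
      (Finset.mem_univ _) (f := p) ?_
    · rw [this] at hsum; exact hsum
    · intro b _ hb
      apply hz' b
      have : (b : ℕ) ≠ N - 1 := fun h => hb (Fin.ext (by simpa using h))
      omega
  · rintro ⟨h1, h0⟩ i _
    by_cases hi : (i : ℕ) < N - 1
    · rw [h0 i hi]; ring
    · have hieq : (i : ℕ) = N - 1 := by have := i.isLt; omega
      have : (N : ℝ) - 1 - (i : ℕ) = 0 := by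
        rw [hieq]
        have : ((N - 1 : ℕ) : ℝ) = (N : ℝ) - 1 := by
          push_cast [Nat.cast_sub hN]; ring
        rw [this]; ring
      rw [this]; ring
end

section
/- In the setting of the truncated-state energy bound, if additionally all amplitudes c_I are real (so that ⟨ψ, H ψ_T⟩ is real, i.e., Im⟨ψ, H ψ_T⟩ = 0), then the improved bound ⟨ψ_T, H ψ_T⟩ − ⟨ψ, H ψ⟩ ≤ 2 ρ(H) √ℓ holds, where ℓ = ∑_{I∉T}|c_I|². -/
/-!
Write `ψ' = ψ_T - ψ` and `ψ'' = ψ_T + ψ`. For a Hermitian `H` the cross terms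
`⟨ψ_T, H ψ⟩` and `⟨ψ, H ψ_T⟩` are complex conjugates, so they cancel in the real part of
`⟨ψ', H ψ''⟩`, which is therefore the energy difference `⟨ψ_T, H ψ_T⟩ - ⟨ψ, H ψ⟩`.
Cauchy–Schwarz bounds it by `ρ(H) ‖ψ'‖ ‖ψ''‖`, and for unit vectors with `Re ⟨ψ_T, ψ⟩ = s`
one has `‖ψ'‖² ‖ψ''‖² = (2 - 2s)(2 + 2s) = 4 (1 - s²)`. For the normalized truncation
`s = √(1 - ℓ)`, so the bound is `2 ρ(H) √ℓ`.
-/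

open RCLike ComplexConjugate
open scoped InnerProductSpace

section InnerProductSpace

variable {𝕜 E : Type*} [RCLike 𝕜] [NormedAddCommGroup E] [InnerProductSpace 𝕜 E]

theorem LinearMap.IsSymmetric.re_inner_map_self_sub_re_inner_map_self {T : E →ₗ[𝕜] E}
    (hT : T.IsSymmetric) (x y : E) :
    re ⟪x, T x⟫_𝕜 - re ⟪y, T y⟫_𝕜 = re ⟪x - y, T (x + y)⟫_𝕜 := by
  have hcross : re ⟪x, T y⟫_𝕜 = re ⟪y, T x⟫_𝕜 := by
    rw [← hT, ← inner_conj_symm, conj_re]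
  simp only [map_add, inner_sub_left, inner_add_right, map_sub]
  linarith

theorem norm_sub_mul_norm_add_of_norm_eq_one {x y : E} (hx : ‖x‖ = 1) (hy : ‖y‖ = 1) :
    ‖x - y‖ * ‖x + y‖ = 2 * √(1 - re ⟪x, y⟫_𝕜 ^ 2) := by
  rw [← Real.sqrt_sq (by positivity : 0 ≤ ‖x - y‖ * ‖x + y‖), mul_pow, norm_sub_sq (𝕜 := 𝕜),
    norm_add_sq (𝕜 := 𝕜), hx, hy,
    show ∀ r : ℝ, (1 ^ 2 - 2 * r + 1 ^ 2) * (1 ^ 2 + 2 * r + 1 ^ 2) = 2 ^ 2 * (1 - r ^ 2) by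
      intro r; ring,
    Real.sqrt_mul (by positivity), Real.sqrt_sq zero_le_two]

theorem LinearMap.IsSymmetric.re_inner_map_self_sub_le {A : E →L[𝕜] E}
    (hA : (A : E →ₗ[𝕜] E).IsSymmetric) {x y : E} (hx : ‖x‖ = 1) (hy : ‖y‖ = 1) :
    re ⟪x, A x⟫_𝕜 - re ⟪y, A y⟫_𝕜 ≤ 2 * ‖A‖ * √(1 - re ⟪x, y⟫_𝕜 ^ 2) := by
  calc re ⟪x, A x⟫_𝕜 - re ⟪y, A y⟫_𝕜 = re ⟪x - y, A (x + y)⟫_𝕜 :=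
        hA.re_inner_map_self_sub_re_inner_map_self x y
    _ ≤ ‖x - y‖ * ‖A (x + y)‖ :=
        (re_le_norm _).trans (norm_inner_le_norm _ _)
    _ ≤ ‖x - y‖ * (‖A‖ * ‖x + y‖) := by gcongr; exact A.le_opNorm _
    _ = 2 * ‖A‖ * √(1 - re ⟪x, y⟫_𝕜 ^ 2) := by
      rw [mul_left_comm, norm_sub_mul_norm_add_of_norm_eq_one (𝕜 := 𝕜) hx hy]; ring

end InnerProductSpace

section Truncation

variable {𝕜 ι : Type*} [RCLike 𝕜] [Fintype ι] [DecidableEq ι] {ψ ψT : EuclideanSpace 𝕜 ι}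
  {T : Finset ι} {c : ℝ}

theorem inner_truncation_left (hψT : ∀ i, ψT i = if i ∈ T then ψ i / c else 0)
    (φ : EuclideanSpace 𝕜 ι) :
    ⟪ψT, φ⟫_𝕜 = (c : 𝕜)⁻¹ * ∑ i ∈ T, conj (ψ i) * φ i := by
  rw [PiLp.inner_apply, Finset.mul_sum, ← Finset.sum_subset (Finset.subset_univ T)]
  · refine Finset.sum_congr rfl fun i hi => ?_
    rw [inner_apply, hψT, if_pos hi, div_eq_mul_inv, map_mul, map_inv₀, conj_ofReal]
    ring
  · intro i _ hi
    rw [hψT, if_neg hi, inner_zero_left]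

theorem inner_truncation_left_self (hψT : ∀ i, ψT i = if i ∈ T then ψ i / c else 0)
    (hc : ∑ i ∈ T, ‖ψ i‖ ^ 2 = c ^ 2) (hc0 : c ≠ 0) : ⟪ψT, ψ⟫_𝕜 = c := by
  have hsum : ∑ i ∈ T, conj (ψ i) * ψ i = (c : 𝕜) ^ 2 := by
    simp_rw [RCLike.conj_mul]; exact_mod_cast hc
  have hc0' : (c : 𝕜) ≠ 0 := ofReal_ne_zero.2 hc0
  rw [inner_truncation_left hψT, hsum]
  field_simp

theorem norm_truncation_eq_one (hψT : ∀ i, ψT i = if i ∈ T then ψ i / c else 0)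
    (hc : ∑ i ∈ T, ‖ψ i‖ ^ 2 = c ^ 2) (hc0 : c ≠ 0) : ‖ψT‖ = 1 := by
  have hinner : ⟪ψT, ψT⟫_𝕜 = 1 := by
    rw [inner_truncation_left hψT,
      Finset.sum_congr rfl fun i hi => by rw [hψT, if_pos hi, mul_div_assoc'],
      ← Finset.sum_div, mul_div_assoc', ← inner_truncation_left hψT,
      inner_truncation_left_self hψT hc hc0, div_self (ofReal_ne_zero.2 hc0)]
  rw [inner_self_eq_norm_sq_to_K] at hinner
  exact (pow_eq_one_iff_of_nonneg (norm_nonneg _) two_ne_zero).1 (by exact_mod_cast hinner)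

end Truncation

open scoped ComplexInnerProductSpace in
theorem truncated_state_energy_bound_real_general (N : ℕ) (H : Matrix (Fin N) (Fin N) ℂ)
    (hH : H.IsHermitian)
    (A : EuclideanSpace ℂ (Fin N) →L[ℂ] EuclideanSpace ℂ (Fin N))
    (hA : A = Matrix.toEuclideanCLM (𝕜 := ℂ) H)
    (ρ : ℝ) (hρ : ρ = ‖A‖)
    (ψ : EuclideanSpace ℂ (Fin N)) (hψ : ‖ψ‖ = 1)
    (T : Finset (Fin N))
    (ℓ : ℝ) (hℓdef : ℓ = ∑ I ∈ Tᶜ, ‖ψ I‖ ^ 2) (hℓ : ℓ < 1)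
    (ψT : EuclideanSpace ℂ (Fin N))
    (hψT : ∀ I, ψT I = if I ∈ T then ψ I / (Real.sqrt (1 - ℓ) : ℂ) else 0) :
    (⟪ψT, A ψT⟫).re - (⟪ψ, A ψ⟫).re ≤ 2 * ρ * Real.sqrt ℓ := by
  have hsymm : (A : EuclideanSpace ℂ (Fin N) →ₗ[ℂ] EuclideanSpace ℂ (Fin N)).IsSymmetric :=
    hA ▸ Matrix.isSymmetric_toEuclideanLin_iff.2 hH
  have hℓ' : 0 ≤ 1 - ℓ := by linarith
  have hTsum : ∑ I ∈ T, ‖ψ I‖ ^ 2 = Real.sqrt (1 - ℓ) ^ 2 := by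
    rw [Real.sq_sqrt hℓ', hℓdef, eq_sub_iff_add_eq, Finset.sum_add_sum_compl,
      ← EuclideanSpace.norm_sq_eq, hψ, one_pow]
  have hs0 : Real.sqrt (1 - ℓ) ≠ 0 := (Real.sqrt_pos.2 (by linarith)).ne'
  have h := hsymm.re_inner_map_self_sub_le (norm_truncation_eq_one hψT hTsum hs0) hψ
  rwa [inner_truncation_left_self hψT hTsum hs0, ofReal_re, Real.sq_sqrt hℓ', sub_sub_cancel,
    ← hρ] at h

open scoped ComplexInnerProductSpace in
/-- Improved truncated-state energy bound for real amplitudes: if all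
coordinates of `ψ` are real (so that `⟨ψ, H ψ_T⟩` is real, i.e.,
`Im ⟨ψ, H ψ_T⟩ = 0`), then `⟨ψ_T, H ψ_T⟩ − ⟨ψ, H ψ⟩ ≤ 2·ρ(H)·√ℓ`. -/
theorem truncated_state_energy_bound_real (N : ℕ) (H : Matrix (Fin N) (Fin N) ℂ)
    (hH : H.IsHermitian)
    (A : EuclideanSpace ℂ (Fin N) →L[ℂ] EuclideanSpace ℂ (Fin N))
    (hA : A = Matrix.toEuclideanCLM (𝕜 := ℂ) H)
    (ρ : ℝ) (hρ : ρ = ‖A‖)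
    (ψ : EuclideanSpace ℂ (Fin N)) (hψ : ‖ψ‖ = 1)
    (hreal : ∀ I, (ψ I).im = 0)
    (T : Finset (Fin N))
    (ℓ : ℝ) (hℓdef : ℓ = ∑ I ∈ Tᶜ, ‖ψ I‖ ^ 2) (hℓ : ℓ < 1)
    (ψT : EuclideanSpace ℂ (Fin N))
    (hψT : ∀ I, ψT I = if I ∈ T then ψ I / (Real.sqrt (1 - ℓ) : ℂ) else 0)
    (him : (⟪ψ, A ψT⟫).im = 0) :
    (⟪ψT, A ψT⟫).re - (⟪ψ, A ψ⟫).re ≤ 2 * ρ * Real.sqrt ℓ :=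
  truncated_state_energy_bound_real_general N H hH A hA ρ hρ ψ hψ T ℓ hℓdef hℓ ψT hψT
end
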